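/- arXiv:1205.5247 — 6 statements merged into one kernel-verified Lean document; each statement's English description precedes it below -/
import Mathlib

section
/- Let M be a matroid on a finite linearly ordered ground set E and A ⊆ E. Define P_M(A) as the set of elements e ∈ E \ A such that e is the smallest element of some cocircuit of M contained in E \ A. Then |P_M(A)| = r(M) − r_M(A), the corank of A. -/
open Set

/-- `e` is the smallest element of `C`. -/
def SmallestIn {α : Type*} [LinearOrder α] (e : α) (C : Set α) : Prop :=
  e ∈ C ∧ ∀ f ∈ C, e ≤ f

/-- `C` is a circuit of `M`: a minimal dependent set. -/
def IsCircuit {α : Type*} (M : Matroid α) (C : Set α) : Prop :=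
  ¬ M.Indep C ∧ ∀ x ∈ C, M.Indep (C \ {x})

/-- A cocircuit is a circuit of the dual matroid. -/
def IsCocircuit {α : Type*} (M : Matroid α) (C : Set α) : Prop :=
  IsCircuit M✶ C

/-- `P_M(A)`: elements outside `A` that are smallest in some cocircuit avoiding `A`. -/
def Pset {α : Type*} [LinearOrder α] (M : Matroid α) (A : Set α) : Set α :=
  {e | e ∉ A ∧ ∃ C, IsCocircuit M C ∧ C ⊆ Aᶜ ∧ SmallestIn e C}

/-- `Q_M(A)`: elements of `A` that are smallest in some circuit contained in `A`. -/
def Qset {α : Type*} [LinearOrder α] (M : Matroid α) (A : Set α) : Set α :=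
  {e | e ∈ A ∧ ∃ C, IsCircuit M C ∧ C ⊆ A ∧ SmallestIn e C}

/-- Externally active elements of `A`. -/
def ExtSet {α : Type*} [LinearOrder α] (M : Matroid α) (A : Set α) : Set α :=
  {e | e ∉ A ∧ ∃ C, IsCircuit M C ∧ C ⊆ A ∪ {e} ∧ SmallestIn e C}

/-- Internally active elements of `A`. -/
def IntSet {α : Type*} [LinearOrder α] (M : Matroid α) (A : Set α) : Set α :=
  {e | e ∈ A ∧ ∃ C, IsCocircuit M C ∧ C ⊆ Aᶜ ∪ {e} ∧ SmallestIn e C}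

/-- The rank of a set: the largest cardinality of an independent subset. -/
noncomputable def rk {α : Type*} (M : Matroid α) (A : Set α) : ℕ :=
  sSup (Set.ncard '' {I | I ⊆ A ∧ M.Indep I})

/-- Matroid perspective (strong-map / quotient condition, form (MP3)). -/
def Perspective {α : Type*} (M M' : Matroid α) : Prop :=
  ∀ C D : Set α, IsCircuit M C → IsCocircuit M' D → (C ∩ D).ncard ≠ 1

/-- Rank codrop of a subset in a matroid perspective. -/
noncomputable def rcd {α : Type*} (M M' : Matroid α) (A : Set α) : ℕ :=
  ((rk M Set.univ : ℤ) - rk M' Set.univ - ((rk M A : ℤ) - rk M' A)).toNat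

/-! Cocircuits are the complements of hyperplanes, so `e` is the least element of a cocircuit
avoiding `A` exactly when `e ∉ cl(A ∪ {f | f < e})`. Hence `P_M(A)` is the set of elements that
the greedy algorithm adds to a basis of `A` when it scans `E` in increasing order, and that
extension is a basis of `M`. -/

section Cocircuit

variable {α : Type*} {M : Matroid α} {C K X : Set α} {e : α}

theorem isCircuit_iff_matroid_isCircuit (hC : C ⊆ M.E) : IsCircuit M C ↔ M.IsCircuit C := by
  rw [Matroid.isCircuit_iff_dep_forall_sdiff_singleton_indep, ← Matroid.not_indep_iff hC]
  rfl

theorem isCocircuit_iff_matroid_isCocircuit (hK : K ⊆ M.E) :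
    IsCocircuit M K ↔ M.IsCocircuit K :=
  isCircuit_iff_matroid_isCircuit hK

theorem Matroid.IsCocircuit.notMem_closure_sdiff (hK : M.IsCocircuit K) (he : e ∈ K) :
    e ∉ M.closure (M.E \ K) := by
  have heE : e ∈ M.E := hK.subset_ground he
  rw [isCocircuit_iff_minimal_compl_nonspanning, minimal_iff_forall_ssubset] at hK
  intro hcl
  have hspan : M.Spanning (M.E \ (K \ {e})) := not_not.1 (hK.2 (sdiff_singleton_ssubset.2 he))
  have hins : M.E \ (K \ {e}) = insert e (M.E \ K) := by
    ext x; by_cases hx : x = e <;> simp [hx, heE]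
  apply hK.1
  rw [spanning_iff_closure_eq, ← closure_insert_eq_of_mem_closure hcl, ← hins]
  exact hspan.closure_eq

theorem Matroid.exists_isCocircuit_mem_disjoint_iff :
    (∃ K, M.IsCocircuit K ∧ e ∈ K ∧ Disjoint K X) ↔ e ∈ M.E \ M.closure X := by
  constructor
  · rintro ⟨K, hK, heK, hKX⟩
    refine ⟨hK.subset_ground heK, fun hcl ↦ hK.notMem_closure_sdiff heK ?_⟩
    rw [← closure_inter_ground] at hcl
    exact M.closure_subset_closure
      (subset_sdiff.2 ⟨inter_subset_right, hKX.symm.mono_left inter_subset_left⟩) hcl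
  · rintro ⟨heE, heX⟩
    obtain ⟨I, hI⟩ := M.exists_isBasis' X
    have hIe : M.Indep (insert e I) :=
      hI.indep.insert_indep_iff.2 (.inl ⟨heE, by rwa [hI.closure_eq_closure]⟩)
    obtain ⟨B, hB, hIB⟩ := hIe.exists_isBase_superset
    have heB : e ∈ B := hIB (mem_insert e I)
    refine ⟨_, hB.compl_closure_sdiff_singleton_isCocircuit heB,
      ⟨heE, hB.indep.notMem_closure_sdiff_of_mem heB⟩, ?_⟩
    have hIB' : I ⊆ B \ {e} := subset_sdiff_singleton ((subset_insert e I).trans hIB)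
      fun heI ↦ heX (M.mem_closure_of_mem' (hI.subset heI))
    rw [disjoint_left]
    rintro x ⟨hxE, hxcl⟩ hxX
    exact hxcl
      (M.closure_subset_closure hIB' (hI.closure_eq_closure ▸ M.mem_closure_of_mem' hxX hxE))

end Cocircuit

section Greedy

variable {α : Type*} [LinearOrder α] {M : Matroid α} {A C I : Set α} {e : α}

def greedyExtension (M : Matroid α) (A : Set α) : Set α :=
  {e | e ∈ M.E ∧ e ∉ M.closure (A ∪ Iio e)}

theorem disjoint_greedyExtension (M : Matroid α) (A : Set α) :
    Disjoint A (greedyExtension M A) := by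
  rw [disjoint_left]
  rintro e heA ⟨heE, hecl⟩
  exact hecl (M.mem_closure_of_mem' (mem_union_left _ heA))

theorem subset_compl_and_smallestIn_iff :
    C ⊆ Aᶜ ∧ SmallestIn e C ↔ e ∈ C ∧ Disjoint C (A ∪ Iio e) := by
  simp only [SmallestIn, subset_compl_iff_disjoint_right, disjoint_union_right]
  constructor
  · rintro ⟨hCA, heC, hmin⟩
    exact ⟨heC, hCA, disjoint_left.2 fun f hfC hfe ↦ (hmin f hfC).not_gt hfe⟩
  · rintro ⟨heC, hCA, hCe⟩
    exact ⟨hCA, heC, fun f hfC ↦ not_lt.1 fun hfe ↦ disjoint_left.1 hCe hfC hfe⟩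

theorem Pset_eq_greedyExtension (hE : M.E = univ) : Pset M A = greedyExtension M A := by
  have hcocircuit (C : Set α) : IsCocircuit M C ↔ M.IsCocircuit C :=
    isCocircuit_iff_matroid_isCocircuit (hE ▸ subset_univ C)
  ext e
  simp only [Pset, mem_ofPred_eq, subset_compl_and_smallestIn_iff, hcocircuit,
    Matroid.exists_isCocircuit_mem_disjoint_iff]
  exact and_iff_right_of_imp fun he ↦ (disjoint_greedyExtension M A).notMem_of_mem_right he

theorem Matroid.IsBasis.isBasis_union_greedyExtension_inter (hI : M.IsBasis I A) (D : Finset α)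
    (hD : IsLowerSet (D : Set α)) :
    M.IsBasis (I ∪ (greedyExtension M A ∩ D)) (A ∪ (M.E ∩ D)) := by
  classical
  induction D using Finset.induction_on_max with
  | empty => simpa
  | insert a s has ih =>
    have hs : (s : Set α) = Iio a := by
      refine subset_antisymm (fun x hx ↦ has x hx) fun x hxa ↦ ?_
      have hx : x ∈ insert a s := by exact_mod_cast hD hxa.le (by simp)
      exact (Finset.mem_insert.1 hx).resolve_left hxa.ne
    have ih := ih (hs ▸ isLowerSet_Iio a)
    rw [hs] at ih
    rw [Finset.coe_insert, hs]
    by_cases haE : a ∈ M.E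
    swap
    · rwa [inter_insert_of_notMem haE, inter_insert_of_notMem fun h ↦ haE h.1]
    by_cases haG : a ∈ greedyExtension M A
    · rw [inter_insert_of_mem haG, inter_insert_of_mem haE, union_insert, union_insert]
      refine ih.insert_isBasis_insert_of_notMem_closure ?_
      rw [ih.closure_eq_closure]
      exact fun h ↦
        haG.2 (M.closure_subset_closure (union_subset_union_right _ inter_subset_right) h)
    · rw [inter_insert_of_notMem haG, inter_insert_of_mem haE, union_insert]
      have hcl : a ∈ M.closure (A ∪ (M.E ∩ Iio a)) := by
        have h : a ∈ M.closure (A ∪ Iio a) := by simpa [greedyExtension, haE] using haG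
        rw [← closure_inter_ground] at h
        refine M.closure_subset_closure ?_ h
        rintro x ⟨hx | hx, hxE⟩
        exacts [.inl hx, .inr ⟨hxE, hx⟩]
      exact ih.isBasis_closure_right.isBasis_subset (ih.subset.trans (subset_insert _ _))
        (insert_subset hcl (M.subset_closure _ ih.subset_ground))

theorem Matroid.IsBasis.isBase_union_greedyExtension [_root_.Finite α] (hI : M.IsBasis I A) :
    M.IsBase (I ∪ greedyExtension M A) := by
  have := Fintype.ofFinite α
  have h := hI.isBasis_union_greedyExtension_inter Finset.univ (by simpa using isLowerSet_univ)
  rwa [Finset.coe_univ, inter_univ, inter_univ, union_eq_self_of_subset_left hI.subset_ground,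
    isBasis_ground_iff] at h

end Greedy

theorem rk_eq_ncard_of_isBasis {α : Type*} {M : Matroid α} [M.RankFinite] {I X : Set α}
    (hI : M.IsBasis I X) : rk M X = I.ncard := by
  refine IsGreatest.csSup_eq ⟨⟨I, ⟨hI.subset, hI.indep⟩, rfl⟩, ?_⟩
  rintro _ ⟨J, ⟨hJX, hJ⟩, rfl⟩
  have h : J.encard ≤ I.encard := hI.encard_eq_eRk ▸ hJ.encard_le_eRk_of_subset hJX
  rwa [← hJ.finite.cast_ncard_eq, ← hI.indep.finite.cast_ncard_eq, Nat.cast_le] at h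

theorem corank_eq_card_Pset {α : Type*} [Fintype α] [LinearOrder α]
    (M : Matroid α) (hE : M.E = Set.univ) (A : Set α) :
    (Pset M A).ncard = rk M Set.univ - rk M A := by
  obtain ⟨I, hI⟩ := M.exists_isBasis A (hE ▸ subset_univ A)
  have hB : M.IsBasis (I ∪ greedyExtension M A) univ :=
    hE ▸ hI.isBase_union_greedyExtension.isBasis_ground
  have hdisj : Disjoint I (greedyExtension M A) :=
    (disjoint_greedyExtension M A).mono_left hI.subset
  rw [Pset_eq_greedyExtension hE, rk_eq_ncard_of_isBasis hI, rk_eq_ncard_of_isBasis hB,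
    ncard_union_eq hdisj, Nat.add_sub_cancel_left]
end

section
/- Two matroids M and M' on the same finite ground set E satisfy the quotient condition (every flat of M' is a flat of M) if and only if no circuit of M and cocircuit of M' intersect in exactly one element. -/
open Set

/-!
The complement of a cocircuit is a flat, and an element outside the closure of a set `X` lies in
a cocircuit avoiding that closure. Hence a circuit `C` of `M` and a cocircuit `K` of `M'` with
`C ∩ K = {e}` exhibit `e` in the `M`-closure of the `M'`-flat `E \ K` but not in it; conversely,
if `e` lies in the `M`-closure of an `M'`-flat `F` but not in `F`, a circuit of `M` through `e`
inside `F ∪ {e}` and a cocircuit of `M'` through `e` avoiding `F` meet exactly in `e`.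
-/

lemma Set.inter_eq_singleton_of_subset_insert {α : Type*} {C K X : Set α} {e : α}
    (hCX : C ⊆ insert e X) (heC : e ∈ C) (heK : e ∈ K) (hKX : Disjoint K X) : C ∩ K = {e} :=
  subset_antisymm (fun _ ⟨hxC, hxK⟩ ↦ (hCX hxC).resolve_right (hKX.notMem_of_mem_left hxK))
    (singleton_subset_iff.2 ⟨heC, heK⟩)

namespace Matroid

variable {α : Type*} {M M' : Matroid α} {K X : Set α} {e : α}

lemma IsCocircuit.isFlat_ground_sdiff (hK : M.IsCocircuit K) : M.IsFlat (M.E \ K) := by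
  refine isFlat_iff_closure_eq.2 <| (M.subset_closure _ sdiff_subset).antisymm' fun x hx ↦ ?_
  refine ⟨mem_ground_of_mem_closure hx, fun hxK ↦ ?_⟩
  obtain ⟨C, hCK, hC, hxC⟩ := exists_isCircuit_of_mem_closure hx fun h ↦ h.2 hxK
  exact hC.inter_isCocircuit_ne_singleton hK <|
    inter_eq_singleton_of_subset_insert hCK hxC hxK disjoint_sdiff_right

lemma exists_isCocircuit_of_notMem_closure (heE : e ∈ M.E) (he : e ∉ M.closure X) :
    ∃ K, M.IsCocircuit K ∧ e ∈ K ∧ Disjoint K (M.closure X) := by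
  obtain ⟨J, hJ⟩ := M.exists_isBasis' X
  rw [← hJ.closure_eq_closure] at he ⊢
  have heJ : e ∉ J := notMem_subset (M.subset_closure J hJ.indep.subset_ground) he
  obtain ⟨K, hK, hKJ⟩ := (hJ.indep.insert_indep_iff_of_notMem heJ).2 ⟨heE, he⟩
    |>.exists_isCocircuit_inter_eq_mem (mem_insert e J)
  have hJK : J ⊆ M.E \ K := fun x hxJ ↦ ⟨hJ.indep.subset_ground hxJ, fun hxK ↦
    heJ ((hKJ.subset ⟨hxK, mem_insert_of_mem e hxJ⟩ : x = e) ▸ hxJ)⟩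
  exact ⟨K, hK, (hKJ.symm.subset rfl).1,
    disjoint_sdiff_right.mono_right
      ((M.closure_subset_closure hJK).trans hK.isFlat_ground_sdiff.closure.subset)⟩

theorem isFlat_of_isFlat_iff_isCircuit_inter_isCocircuit_ne_singleton (hE : M.E = M'.E) :
    (∀ F, M'.IsFlat F → M.IsFlat F) ↔
      ∀ C K, M.IsCircuit C → M'.IsCocircuit K → ∀ e, C ∩ K ≠ {e} := by
  refine ⟨fun h C K hC hK e hCK ↦ ?_, fun h F hF ↦ ?_⟩
  · have heK : e ∈ K := (hCK.symm.subset rfl).2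
    have hCeK : C \ {e} ⊆ M'.E \ K := fun x ⟨hxC, hxe⟩ ↦
      ⟨hE ▸ hC.subset_ground hxC, fun hxK ↦ hxe (hCK.subset ⟨hxC, hxK⟩)⟩
    have heC : e ∈ M.closure (C \ {e}) :=
      hC.mem_closure_sdiff_singleton_of_mem (hCK.symm.subset rfl).1
    exact ((h _ hK.isFlat_ground_sdiff).closure ▸ M.closure_subset_closure hCeK heC).2 heK
  refine isFlat_iff_closure_eq.2 <|
    (M.subset_closure F (hE ▸ hF.subset_ground)).antisymm' fun e he ↦ by_contra fun heF ↦ ?_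
  obtain ⟨C, hCF, hC, heC⟩ := exists_isCircuit_of_mem_closure he heF
  obtain ⟨K, hK, heK, hKF⟩ := M'.exists_isCocircuit_of_notMem_closure
    (hE ▸ mem_ground_of_mem_closure he) (hF.closure.symm ▸ heF)
  exact h C K hC hK e <| inter_eq_singleton_of_subset_insert hCF heC heK (hF.closure ▸ hKF)

end Matroid

lemma isCircuit_iff_isCircuit_of_subset_ground {α : Type*} {M : Matroid α} {C : Set α}
    (hC : C ⊆ M.E) : IsCircuit M C ↔ M.IsCircuit C := by
  rw [Matroid.isCircuit_iff_dep_forall_sdiff_singleton_indep, ← Matroid.not_indep_iff hC]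
  rfl

theorem quotient_iff_no_circuit_cocircuit_single_intersection_general {α : Type*}
    (M M' : Matroid α) (hE : M.E = Set.univ) (hE' : M'.E = Set.univ) :
    (∀ F : Set α, M'.IsFlat F → M.IsFlat F) ↔
      (∀ C D : Set α, IsCircuit M C → IsCocircuit M' D → (C ∩ D).ncard ≠ 1) := by
  rw [Matroid.isFlat_of_isFlat_iff_isCircuit_inter_isCocircuit_ne_singleton (hE.trans hE'.symm)]
  refine forall₂_congr fun C D ↦ ?_
  rw [IsCocircuit, isCircuit_iff_isCircuit_of_subset_ground (hE ▸ subset_univ C),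
    isCircuit_iff_isCircuit_of_subset_ground (M := M'✶) (hE' ▸ subset_univ D),
    ne_eq, ncard_eq_one, not_exists]

theorem quotient_iff_no_circuit_cocircuit_single_intersection {α : Type*} [Fintype α]
    (M M' : Matroid α) (hE : M.E = Set.univ) (hE' : M'.E = Set.univ) :
    (∀ F : Set α, M'.IsFlat F → M.IsFlat F) ↔
      (∀ C D : Set α, IsCircuit M C → IsCocircuit M' D → (C ∩ D).ncard ≠ 1) :=
  quotient_iff_no_circuit_cocircuit_single_intersection_general M M' hE hE'
end

section
/- Two matroids M and M' on the same finite ground set E form a matroid perspective M → M' (i.e., every flat of M' is a flat of M) if and only if for all Y ⊆ X ⊆ E one has r_{M'}(X) − r_{M'}(Y) ≤ r_M(X) − r_M(Y). -/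
open Set

/-! If every flat of `M'` is a flat of `M`, then `cl_M(X) ⊆ cl_{M'}(X)` for all `X`. Extending an
`M`-basis `I` of `Y` to an `M`-basis `J` of `X`, the set `X` then lies in the `M'`-closure of
`(J \ I) ∪ Y`, so `r_{M'}(X) - r_{M'}(Y) ≤ |J \ I| = r_M(X) - r_M(Y)`. Conversely, if `F` is a
flat of `M'` and `e ∈ cl_M(F) \ F`, then adding `e` to `F` raises `r_{M'}` but not `r_M`. -/

namespace Matroid

variable {α : Type*} {M M' : Matroid α} {X Y F : Set α}

lemma closure_subset_closure_of_forall_isFlat (hE : M.E ⊆ M'.E)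
    (h : ∀ F, M'.IsFlat F → M.IsFlat F) (X : Set α) : M.closure X ⊆ M'.closure X := by
  rw [← closure_inter_ground, ← (h _ (M'.isFlat_closure X)).closure]
  exact M.closure_subset_closure
    ((inter_subset_inter_right X hE).trans (M'.inter_ground_subset_closure X))

lemma eRk_add_eRk_le_of_closure_subset (hE : M'.E ⊆ M.E)
    (h : ∀ X, M.closure X ⊆ M'.closure X) (hYX : Y ⊆ X) :
    M'.eRk X + M.eRk Y ≤ M.eRk X + M'.eRk Y := by
  obtain ⟨I, hI⟩ := M.exists_isBasis' Y
  obtain ⟨J, hJ, hIJ⟩ := hI.indep.subset_isBasis'_of_subset (hI.subset.trans hYX)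
  have hJ_sub : J ⊆ (J \ I) ∪ Y := fun e he ↦ by
    by_cases heI : e ∈ I
    · exact Or.inr (hI.subset heI)
    · exact Or.inl ⟨he, heI⟩
  have hX_sub : X ∩ M'.E ⊆ M'.closure ((J \ I) ∪ Y) := calc
    X ∩ M'.E ⊆ X ∩ M.E := inter_subset_inter_right X hE
    _ ⊆ M.closure J := hJ.closure_eq_closure ▸ M.inter_ground_subset_closure X
    _ ⊆ M'.closure J := h J
    _ ⊆ M'.closure ((J \ I) ∪ Y) := M'.closure_subset_closure hJ_sub
  have hM' : M'.eRk X ≤ (J \ I).encard + M'.eRk Y := calc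
    M'.eRk X = M'.eRk (X ∩ M'.E) := (M'.eRk_inter_ground X).symm
    _ ≤ M'.eRk (M'.closure ((J \ I) ∪ Y)) := M'.eRk_mono hX_sub
    _ = M'.eRk ((J \ I) ∪ Y) := M'.eRk_closure_eq _
    _ ≤ (J \ I).encard + M'.eRk Y := M'.eRk_union_le_encard_add_eRk _ _
  have hM : M.eRk X = (J \ I).encard + M.eRk Y := by
    rw [hJ.eRk_eq_encard, hI.eRk_eq_encard, encard_sdiff_add_encard_of_subset hIJ]
  calc M'.eRk X + M.eRk Y ≤ (J \ I).encard + M'.eRk Y + M.eRk Y := by gcongr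
    _ = M.eRk X + M'.eRk Y := by rw [hM]; ring

lemma isFlat_of_eRk_add_eRk_le [M.RankFinite] [M'.RankFinite] (hE : M.E = M'.E)
    (h : ∀ X Y, Y ⊆ X → M'.eRk X + M.eRk Y ≤ M.eRk X + M'.eRk Y) (hF : M'.IsFlat F) :
    M.IsFlat F := by
  refine isFlat_iff_closure_eq.2 <| subset_antisymm (fun e he ↦ by_contra fun heF ↦ ?_)
    (M.subset_closure F (hE ▸ hF.subset_ground))
  have hM : M.eRk (insert e F) = M.eRk F := by
    rw [← eRk_insert_closure_eq, insert_eq_of_mem he, eRk_closure_eq]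
  have hM' : M'.eRk (insert e F) = M'.eRk F + 1 :=
    M'.eRk_insert_eq_add_one ⟨hE ▸ mem_ground_of_mem_closure he, hF.closure.symm ▸ heF⟩
  have hle := h (insert e F) F (subset_insert e F)
  rw [hM, hM'] at hle
  lift M.eRk F to ℕ using (M.isRkFinite_set F).eRk_lt_top.ne with m
  lift M'.eRk F to ℕ using (M'.isRkFinite_set F).eRk_lt_top.ne with m'
  norm_cast at hle
  omega

end Matroid

open Matroid

lemma cast_rk_eq_eRk {α : Type*} (M : Matroid α) [M.RankFinite] (X : Set α) :
    (rk M X : ℕ∞) = M.eRk X := by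
  obtain ⟨I, hI⟩ := M.exists_isBasis' X
  have hmax : IsGreatest (ncard '' {J | J ⊆ X ∧ M.Indep J}) I.ncard := by
    refine ⟨⟨I, ⟨hI.subset, hI.indep⟩, rfl⟩, ?_⟩
    rintro _ ⟨J, ⟨hJX, hJ⟩, rfl⟩
    have hle := hJ.encard_le_eRk_of_subset hJX
    rw [hI.eRk_eq_encard, ← hJ.finite.cast_ncard_eq, ← hI.indep.finite.cast_ncard_eq] at hle
    exact_mod_cast hle
  rw [rk, hmax.csSup_eq, hI.indep.finite.cast_ncard_eq, hI.eRk_eq_encard]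

theorem quotient_iff_rank_difference_le {α : Type*} [Fintype α]
    (M M' : Matroid α) (hE : M.E = Set.univ) (hE' : M'.E = Set.univ) :
    (∀ F : Set α, M'.IsFlat F → M.IsFlat F) ↔
      (∀ X Y : Set α, Y ⊆ X →
        (rk M' X : ℤ) - rk M' Y ≤ (rk M X : ℤ) - rk M Y) := by
  have hEE : M.E = M'.E := hE.trans hE'.symm
  have hrk (X Y : Set α) : (rk M' X : ℤ) - rk M' Y ≤ (rk M X : ℤ) - rk M Y ↔
      M'.eRk X + M.eRk Y ≤ M.eRk X + M'.eRk Y := by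
    rw [sub_le_sub_iff]
    simp only [← cast_rk_eq_eRk]
    norm_cast
  simp only [hrk]
  exact ⟨fun h _ _ hYX ↦ eRk_add_eRk_le_of_closure_subset hEE.ge
      (closure_subset_closure_of_forall_isFlat hEE.le h) hYX,
    fun h _ hF ↦ isFlat_of_eRk_add_eRk_le hEE h hF⟩
end

section
/- Let M → M' be a matroid perspective on a finite linearly ordered set E, and A ⊆ E. Define B = (A ∪ P_{M'}(A)) \ Q_M(A), where P_{M'}(A) = {e ∈ E\A : e smallest in some cocircuit of M' contained in E\A} and Q_M(A) = {e ∈ A : e smallest in some circuit of M contained in A}. Then B is independent in M and spanning in M'. -/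
open Set

/-!
If `M` had a circuit `C ⊆ B`, then `C ⊄ A`, since the least element of `C` would lie in `Q_M(A)`.
So the largest element `g` of `C \ A` lies in `P_{M'}(A)`: it is least in a cocircuit `D ⊆ Aᶜ`
of `M'`. By the perspective condition `C ∩ D` has a second element, which lies in `C \ A` and
exceeds `g`. Spanning in `M'` is the dual statement: `M'✶ → M✶` is again a perspective, and
replacing `A` by `Aᶜ` swaps the roles of `P` and `Q` and turns `B` into its complement.
-/

section

variable {α : Type*}

lemma exists_isCircuit_subset [Finite α] (M : Matroid α) {B : Set α} (hB : ¬ M.Indep B) :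
    ∃ C ⊆ B, IsCircuit M C := by
  obtain ⟨C, hCB, hC⟩ :=
    exists_minimal_le_of_wellFoundedLT (fun C => C ⊆ B ∧ ¬ M.Indep C) B ⟨subset_rfl, hB⟩
  refine ⟨C, hC.prop.1, hC.prop.2, fun x hx => ?_⟩
  by_contra hdep
  exact hC.not_prop_of_lt (sdiff_singleton_ssubset.2 hx) ⟨sdiff_subset.trans hC.prop.1, hdep⟩

lemma IsCircuit.nonempty {M : Matroid α} {C : Set α} (hC : IsCircuit M C) : C.Nonempty :=
  nonempty_iff_ne_empty.2 fun h => hC.1 (h ▸ M.empty_indep)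

lemma exists_smallestIn [LinearOrder α] [Finite α] {C : Set α} (hC : C.Nonempty) :
    ∃ e, SmallestIn e C :=
  let ⟨e, he, hmin⟩ := exists_min_image C id (toFinite C) hC
  ⟨e, he, hmin⟩

lemma Perspective.dual {M M' : Matroid α} (h : Perspective M M') : Perspective M'✶ M✶ := by
  intro C D hC hD
  rw [inter_comm]
  exact h D C (by rwa [IsCocircuit, Matroid.dual_dual] at hD) hC

lemma Perspective.exists_gt_mem_inter [LinearOrder α] {M M' : Matroid α} (h : Perspective M M')
    {C D : Set α} (hC : IsCircuit M C) (hD : IsCocircuit M' D) {g : α} (hg : g ∈ C ∩ D)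
    (hmin : ∀ x ∈ C ∩ D, g ≤ x) : ∃ x ∈ C ∩ D, g < x := by
  by_contra! hle
  exact h C D hC hD <| ncard_eq_one.2
    ⟨g, eq_singleton_iff_unique_mem.2 ⟨hg, fun x hx => le_antisymm (hle x hx) (hmin x hx)⟩⟩

lemma Pset_dual_compl [LinearOrder α] (M : Matroid α) (A : Set α) : Pset M✶ Aᶜ = Qset M A := by
  simp only [Pset, Qset, IsCocircuit, Matroid.dual_dual, compl_compl, mem_compl_iff, not_not]

lemma Qset_dual_compl [LinearOrder α] (M : Matroid α) (A : Set α) : Qset M✶ Aᶜ = Pset M A := rfl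

def fMM' [LinearOrder α] (M M' : Matroid α) (A : Set α) : Set α :=
  (A ∪ Pset M' A) \ Qset M A

lemma compl_fMM' [LinearOrder α] (M M' : Matroid α) (A : Set α) :
    (fMM' M M' A)ᶜ = fMM' M'✶ M✶ Aᶜ := by
  ext e
  have hP : e ∈ Pset M' A → e ∉ A := fun he => he.1
  have hQ : e ∈ Qset M A → e ∈ A := fun he => he.1
  simp only [fMM', Pset_dual_compl, Qset_dual_compl, mem_compl_iff, mem_sdiff, mem_union]
  tauto

lemma Perspective.indep_fMM' [LinearOrder α] [Finite α] {M M' : Matroid α} (h : Perspective M M')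
    (A : Set α) : M.Indep (fMM' M M' A) := by
  by_contra hdep
  obtain ⟨C, hCB, hC⟩ := exists_isCircuit_subset M hdep
  have hCA : (C \ A).Nonempty := by
    refine nonempty_of_not_subset fun hCA => ?_
    obtain ⟨e, he⟩ := exists_smallestIn hC.nonempty
    exact (hCB he.1).2 ⟨hCA he.1, C, hC, hCA, he⟩
  obtain ⟨g, hg, hgmax⟩ := exists_max_image (C \ A) id (toFinite _) hCA
  obtain ⟨-, D, hD, hDA, hgD⟩ := (hCB hg.1).1.resolve_left hg.2
  obtain ⟨x, hx, hgx⟩ := h.exists_gt_mem_inter hC hD ⟨hg.1, hgD.1⟩ fun x hx => hgD.2 x hx.2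
  exact (hgmax x ⟨hx.1, hDA hx.2⟩).not_gt hgx

lemma Perspective.spanning_fMM' [LinearOrder α] [Finite α] {M M' : Matroid α}
    (h : Perspective M M') (hE' : M'.E = univ) (A : Set α) : M'.Spanning (fMM' M M' A) := by
  rw [Matroid.spanning_iff_compl_coindep (hE' ▸ subset_univ _), hE', ← compl_eq_univ_sdiff,
    compl_fMM']
  exact h.dual.indep_fMM' Aᶜ

end

theorem fMM'_indep_spanning_general {α : Type*} [Fintype α] [LinearOrder α]
    (M M' : Matroid α) (hE' : M'.E = Set.univ)
    (h : Perspective M M') (A : Set α) :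
    M.Indep ((A ∪ Pset M' A) \ Qset M A) ∧ M'.Spanning ((A ∪ Pset M' A) \ Qset M A) :=
  ⟨h.indep_fMM' A, h.spanning_fMM' hE' A⟩

theorem fMM'_indep_spanning {α : Type*} [Fintype α] [LinearOrder α]
    (M M' : Matroid α) (hE : M.E = Set.univ) (hE' : M'.E = Set.univ)
    (h : Perspective M M') (A : Set α) :
    M.Indep ((A ∪ Pset M' A) \ Qset M A) ∧ M'.Spanning ((A ∪ Pset M' A) \ Qset M A) :=
  fMM'_indep_spanning_general M M' hE' h A
end

section
/- Let M → M' be a matroid perspective on a finite linearly ordered set E, A ⊆ E, and B = (A ∪ P_{M'}(A)) \ Q_M(A). Then B \ Int_{M'}(B) ⊆ A ⊆ B ∪ Ext_M(B), where Int_{M'}(B) is the set of internally active elements of B in M' and Ext_M(B) is the set of externally active elements of B in M. -/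
open Set

/-! An element `e ∈ Qset N S` lies in the closure of the larger elements of `S`; by downward
induction these are all spanned by the larger elements of `S \ Qset N S`, so the fundamental
circuit of `e` over them has `e` as its smallest element and meets `Qset N S` only in `e`.
Applied to `N = M` inside `A`, and to `N = M'✶` inside `Aᶜ` (where `Qset M'✶ Aᶜ` is `Pset M' A`),
this circuit witnesses the activity required for the two inclusions. -/

lemma isCircuit_iff_matroid_isCircuit_s9 {α : Type*} {N : Matroid α} (hN : N.E = univ) {C : Set α} :
    IsCircuit N C ↔ N.IsCircuit C := by
  rw [Matroid.isCircuit_iff_dep_forall_sdiff_singleton_indep, Matroid.dep_iff, hN]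
  exact ⟨fun ⟨hC, hdel⟩ => ⟨⟨hC, subset_univ C⟩, hdel⟩, fun h => ⟨h.1.1, h.2⟩⟩

section Activity

variable {α : Type*} [LinearOrder α] {N : Matroid α} {S : Set α}

lemma mem_closure_inter_Ioi_of_mem_Qset (hN : N.E = univ) {e : α} (he : e ∈ Qset N S) :
    e ∈ N.closure (S ∩ Ioi e) := by
  obtain ⟨-, C, hC, hCS, heC, hmin⟩ := he
  have hC' := (isCircuit_iff_matroid_isCircuit_s9 hN).1 hC
  refine N.closure_subset_closure ?_ (hC'.mem_closure_sdiff_singleton_of_mem heC)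
  rintro f ⟨hfC, hfe⟩
  exact ⟨hCS hfC, (hmin f hfC).lt_of_ne' hfe⟩

lemma inter_Ioi_subset_closure_diff_Qset [WellFoundedGT α] (hN : N.E = univ) (y : α) :
    S ∩ Ioi y ⊆ N.closure ((S \ Qset N S) ∩ Ioi y) := by
  induction y using WellFoundedGT.induction with
  | _ y ih =>
    rintro z ⟨hzS, hyz⟩
    by_cases hzQ : z ∈ Qset N S
    · have hmono : N.closure ((S \ Qset N S) ∩ Ioi z) ⊆ N.closure ((S \ Qset N S) ∩ Ioi y) :=
        N.closure_subset_closure (inter_subset_inter_right _ (Ioi_subset_Ioi hyz.le))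
      exact hmono <| N.closure_subset_closure_of_subset_closure (ih z hyz)
        (mem_closure_inter_Ioi_of_mem_Qset hN hzQ)
    · exact N.subset_closure _ (by simp [hN]) ⟨⟨hzS, hzQ⟩, hyz⟩

lemma exists_isCircuit_smallestIn_subset_insert_diff_Qset [WellFoundedGT α] (hN : N.E = univ)
    {e : α} (he : e ∈ Qset N S) :
    ∃ C, IsCircuit N C ∧ C ⊆ insert e (S \ Qset N S) ∧ SmallestIn e C := by
  have hcl : e ∈ N.closure ((S \ Qset N S) ∩ Ioi e) :=
    N.closure_subset_closure_of_subset_closure (inter_Ioi_subset_closure_diff_Qset hN e)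
      (mem_closure_inter_Ioi_of_mem_Qset hN he)
  obtain ⟨C, hCsub, hC, heC⟩ := N.exists_isCircuit_of_mem_closure hcl (fun h => lt_irrefl e h.2)
  refine ⟨C, (isCircuit_iff_matroid_isCircuit_s9 hN).2 hC,
    hCsub.trans (insert_subset_insert inter_subset_left), heC, fun f hf => ?_⟩
  rcases hCsub hf with rfl | ⟨-, hef⟩
  exacts [le_rfl, le_of_lt hef]

end Activity

theorem fMM'_interval_contains_general {α : Type*} [Fintype α] [LinearOrder α]
    (M M' : Matroid α) (hE : M.E = Set.univ) (hE' : M'.E = Set.univ)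
    (A : Set α) :
    ((A ∪ Pset M' A) \ Qset M A) \ IntSet M' ((A ∪ Pset M' A) \ Qset M A) ⊆ A ∧
      A ⊆ ((A ∪ Pset M' A) \ Qset M A) ∪ ExtSet M ((A ∪ Pset M' A) \ Qset M A) := by
  set B := (A ∪ Pset M' A) \ Qset M A
  constructor
  · rintro e ⟨heB, heInt⟩
    by_contra heA
    have heP : e ∈ Qset M'✶ Aᶜ := heB.1.resolve_left heA
    obtain ⟨D, hD, hDsub, heD⟩ :=
      exists_isCircuit_smallestIn_subset_insert_diff_Qset (by rw [M'.dual_ground, hE']) heP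
    refine heInt ⟨heB, D, hD, fun f hf => ?_, heD⟩
    rcases hDsub hf with rfl | ⟨hfA, hfP⟩
    exacts [Or.inr rfl, Or.inl fun hfB => hfB.1.elim hfA hfP]
  · intro e heA
    by_cases heB : e ∈ B
    · exact Or.inl heB
    have heQ : e ∈ Qset M A := by_contra fun hQ => heB ⟨Or.inl heA, hQ⟩
    obtain ⟨D, hD, hDsub, heD⟩ := exists_isCircuit_smallestIn_subset_insert_diff_Qset hE heQ
    refine Or.inr ⟨heB, D, hD, fun f hf => ?_, heD⟩
    rcases hDsub hf with rfl | ⟨hfA, hfQ⟩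
    exacts [Or.inr rfl, Or.inl ⟨Or.inl hfA, hfQ⟩]

theorem fMM'_interval_contains {α : Type*} [Fintype α] [LinearOrder α]
    (M M' : Matroid α) (hE : M.E = Set.univ) (hE' : M'.E = Set.univ)
    (h : Perspective M M') (A : Set α) :
    ((A ∪ Pset M' A) \ Qset M A) \ IntSet M' ((A ∪ Pset M' A) \ Qset M A) ⊆ A ∧
      A ⊆ ((A ∪ Pset M' A) \ Qset M A) ∪ ExtSet M ((A ∪ Pset M' A) \ Qset M A) :=
  fMM'_interval_contains_general M M' hE hE' A
end

section
/- Let M be a matroid on a finite linearly ordered set E. Then t(M; x+u, y+v) = Σ_{A⊆E} x^{ι_M(A)} u^{cr_M(A)} y^{ε_M(A)} v^{nl_M(A)}, as polynomials in four variables x, u, y, v. -/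
open Set

/-- The Tutte polynomial of a matroid, evaluated at elements `x, y` of a commutative ring. -/
noncomputable def tutteEval {α : Type*} [Fintype α] {R : Type*} [CommRing R]
    (M : Matroid α) (x y : R) : R :=
  ∑ A ∈ (Finset.univ : Finset α).powerset,
    (x - 1) ^ (rk M Set.univ - rk M (A : Set α)) *
      (y - 1) ^ (A.card - rk M (A : Set α))


/-!
Delete and contract the largest element `g` of `E`. Being largest, `g` is the least element only
of a circuit or cocircuit equal to `{g}`, so it never affects the activity of another element.
Hence, when `g` is neither a loop nor a coloop, the terms with `g ∉ A` (resp. `g ∈ A`) are the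
terms of `M ＼ g` (resp. `M ／ g`) on both sides, and both sides satisfy
`t(M) = t(M ＼ g) + t(M ／ g)`. A loop `g` is externally active for every `A ∌ g` and raises the
nullity of `A ∪ {g}`, giving the factor `y + v` on both sides. Duality exchanges `(x, u)` with
`(y, v)` and `A` with `E \ A`; it settles the coloop case and reduces contraction to deletion.
-/

namespace Finset

lemma sum_powerset_sdiff {α β : Type*} [DecidableEq α] [AddCommMonoid β] (s : Finset α)
    (f : Finset α → β) : ∑ t ∈ s.powerset, f (s \ t) = ∑ t ∈ s.powerset, f t :=
  sum_nbij' (s \ ·) (s \ ·) (by simp) (by simp)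
    (fun _ ht ↦ sdiff_sdiff_eq_self (mem_powerset.1 ht))
    (fun _ ht ↦ sdiff_sdiff_eq_self (mem_powerset.1 ht)) (by simp)

end Finset

namespace Matroid

variable {α : Type*} {M : Matroid α} {A C Z : Set α} {e g : α}

/-- Both sides are `0` when `A` has infinite rank. -/
lemma rk_eq_toNat_eRk (M : Matroid α) (A : Set α) : rk M A = (M.eRk A).toNat := by
  unfold rk
  cases h : M.eRk A with
  | top =>
    suffices ¬ BddAbove (Set.ncard '' {I | I ⊆ A ∧ M.Indep I}) by
      simp [Nat.sSup_of_not_bddAbove this]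
    rintro ⟨b, hb⟩
    obtain ⟨I, hIA, hI, hIc⟩ := le_eRk_iff.1 (h ▸ le_top : ((b + 1 : ℕ) : ℕ∞) ≤ M.eRk A)
    have hle := hb ⟨I, ⟨hIA, hI⟩, rfl⟩
    rw [← (finite_of_encard_eq_coe hIc).cast_ncard_eq, Nat.cast_inj] at hIc
    omega
  | coe k =>
    refine IsGreatest.csSup_eq ⟨?_, ?_⟩
    · obtain ⟨I, hIA, hI, hIc⟩ := le_eRk_iff.1 h.ge
      rw [← (finite_of_encard_eq_coe hIc).cast_ncard_eq, Nat.cast_inj] at hIc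
      exact ⟨I, ⟨hIA, hI⟩, hIc⟩
    · rintro _ ⟨I, ⟨hIA, hI⟩, rfl⟩
      have hle := hI.encard_le_eRk_of_subset hIA
      rw [h] at hle
      rw [← (finite_of_encard_le_coe hle).cast_ncard_eq, Nat.cast_le] at hle
      simpa using hle

lemma cast_rk (M : Matroid α) [M.RankFinite] (A : Set α) : (rk M A : ℕ∞) = M.eRk A := by
  rw [rk_eq_toNat_eRk, ENat.natCast_toNat (eRk_ne_top_iff.2 (M.isRkFinite_set A))]

lemma rk_le_rk_univ (M : Matroid α) [M.RankFinite] (A : Set α) : rk M A ≤ rk M univ := by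
  rw [← Nat.cast_le (α := ℕ∞), cast_rk, cast_rk]
  exact M.eRk_mono (subset_univ A)

lemma rk_le_ncard (M : Matroid α) [M.RankFinite] (hA : A.Finite) : rk M A ≤ A.ncard := by
  rw [← Nat.cast_le (α := ℕ∞), cast_rk, hA.cast_ncard_eq]
  exact M.eRk_le_encard A

lemma rk_dual_add_rk_univ [M.Finite] (hA : A ⊆ M.E) :
    rk M✶ (M.E \ A) + rk M univ = rk M A + (M.E \ A).ncard := by
  have h := M.eRk_dual_add_eRank (M.E \ A)
  rw [sdiff_sdiff_cancel_left hA, ← eRk_univ_eq, ← cast_rk, ← cast_rk, ← cast_rk,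
    ← M.ground_finite.sdiff.cast_ncard_eq] at h
  exact_mod_cast h

lemma rk_delete_of_notMem (hgA : g ∉ A) : rk (M ＼ {g}) A = rk M A := by
  rw [rk_eq_toNat_eRk, rk_eq_toNat_eRk, delete_eq_restrict, restrict_eRk_eq',
    ← inter_sdiff_assoc, sdiff_singleton_eq_self (fun h ↦ hgA h.1), eRk_inter_ground]

lemma rk_univ_delete_of_not_isColoop (hg : ¬ M.IsColoop g) :
    rk (M ＼ {g}) univ = rk M univ := by
  obtain ⟨B, hB, hgB⟩ : ∃ B, M.IsBase B ∧ g ∉ B := by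
    simpa [isColoop_iff_forall_mem_isBase] using hg
  have hBE : B ⊆ M.E \ {g} := subset_sdiff_singleton hB.subset_ground hgB
  rw [rk_eq_toNat_eRk, rk_eq_toNat_eRk, eRk_univ_eq, eRk_univ_eq, delete_eq_restrict,
    eRank_restrict, ← hB.eRk_eq_eRank]
  exact congrArg _ ((M.eRk_mono hBE).antisymm' (hB.eRk_eq_eRank ▸ M.eRk_le_eRank _))

lemma IsLoop.rk_insert (hg : M.IsLoop g) (A : Set α) : rk M (insert g A) = rk M A := by
  rw [rk_eq_toNat_eRk, rk_eq_toNat_eRk, ← union_singleton,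
    eRk_eq_eRk_union_eRk_le_zero A hg.eRk_eq.le]

noncomputable def corank (M : Matroid α) (A : Set α) : ℕ := rk M univ - rk M A

noncomputable def nullity (M : Matroid α) (A : Set α) : ℕ := A.ncard - rk M A

lemma nullity_dual_compl [M.Finite] (hA : A ⊆ M.E) : M✶.nullity (M.E \ A) = M.corank A := by
  have h := rk_dual_add_rk_univ hA
  have := M.rk_le_rk_univ A
  unfold nullity corank
  omega

lemma corank_dual_compl [M.Finite] (hA : A ⊆ M.E) : M✶.corank (M.E \ A) = M.nullity A := by
  have h := rk_dual_add_rk_univ (M := M✶) (sdiff_subset : M.E \ A ⊆ M✶.E)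
  rw [dual_dual, dual_ground, sdiff_sdiff_cancel_left hA] at h
  have := M✶.rk_le_rk_univ (M.E \ A)
  unfold nullity corank
  omega

lemma nullity_delete (hgA : g ∉ A) : (M ＼ {g}).nullity A = M.nullity A := by
  rw [nullity, nullity, rk_delete_of_notMem hgA]

lemma corank_delete (hg : ¬ M.IsColoop g) (hgA : g ∉ A) :
    (M ＼ {g}).corank A = M.corank A := by
  rw [corank, corank, rk_delete_of_notMem hgA, rk_univ_delete_of_not_isColoop hg]

lemma IsLoop.corank_insert (hg : M.IsLoop g) (A : Set α) :
    M.corank (insert g A) = M.corank A := by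
  rw [corank, corank, hg.rk_insert]

lemma IsLoop.nullity_insert [M.RankFinite] (hg : M.IsLoop g) (hgA : g ∉ A) (hA : A.Finite) :
    M.nullity (insert g A) = M.nullity A + 1 := by
  have := M.rk_le_ncard hA
  rw [nullity, nullity, hg.rk_insert, ncard_insert_of_notMem hgA hA]
  omega

lemma finite_of_ground_eq_coe {E : Finset α} (hE : M.E = E) : M.Finite := ⟨hE ▸ E.finite_toSet⟩

section Tutte

variable {R : Type*} [CommRing R] {x y : R}

noncomputable def tutteTerm (M : Matroid α) (x y : R) (A : Set α) : R :=
  (x - 1) ^ M.corank A * (y - 1) ^ M.nullity A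

noncomputable def tutteSum (M : Matroid α) (E : Finset α) (x y : R) : R :=
  ∑ A ∈ E.powerset, M.tutteTerm x y A

lemma tutteTerm_dual [M.Finite] (hA : A ⊆ M.E) :
    M✶.tutteTerm x y (M.E \ A) = M.tutteTerm y x A := by
  rw [tutteTerm, tutteTerm, corank_dual_compl hA, nullity_dual_compl hA, mul_comm]

lemma tutteTerm_delete (hg : ¬ M.IsColoop g) (hgA : g ∉ A) :
    (M ＼ {g}).tutteTerm x y A = M.tutteTerm x y A := by
  rw [tutteTerm, tutteTerm, corank_delete hg hgA, nullity_delete hgA]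

/-- Contraction is deletion in the dual. -/
lemma tutteTerm_contract [M.Finite] (hg : ¬ M.IsLoop g) (hA : insert g A ⊆ M.E) (hgA : g ∉ A) :
    (M ／ {g}).tutteTerm x y A = M.tutteTerm x y (insert g A) := by
  have hA' : A ⊆ (M ／ {g}).E := subset_sdiff_singleton ((subset_insert g A).trans hA) hgA
  rw [← tutteTerm_dual hA', dual_contract, contract_ground,
    tutteTerm_delete (by rwa [dual_isColoop_iff_isLoop]) (by simp), sdiff_sdiff,
    singleton_union, tutteTerm_dual hA]

lemma IsLoop.tutteTerm_insert [M.RankFinite] (hg : M.IsLoop g) (hgA : g ∉ A) (hA : A.Finite) :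
    M.tutteTerm x y (insert g A) = (y - 1) * M.tutteTerm x y A := by
  rw [tutteTerm, tutteTerm, hg.corank_insert, hg.nullity_insert hgA hA]
  ring

lemma tutteSum_dual {E : Finset α} (hE : M.E = E) : M✶.tutteSum E x y = M.tutteSum E y x := by
  classical
  have := finite_of_ground_eq_coe hE
  rw [tutteSum, tutteSum, ← Finset.sum_powerset_sdiff]
  refine Finset.sum_congr rfl fun A hA ↦ ?_
  rw [Finset.coe_sdiff, ← hE, tutteTerm_dual (hE ▸ Finset.coe_subset.2 (Finset.mem_powerset.1 hA))]

end Tutte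

/-- After contracting `Z ∌ e`, the element `e` of the circuit `C` still lies in the closure of
`C \ {e}`, hence in a circuit inside `C \ Z`. -/
lemma IsCircuit.exists_isCircuit_contract (hC : M.IsCircuit C) (heC : e ∈ C) (heZ : e ∉ Z) :
    ∃ C' ⊆ C \ Z, (M ／ Z).IsCircuit C' ∧ e ∈ C' := by
  have he : e ∈ (M ／ Z).closure ((C \ {e}) \ Z) := by
    rw [contract_closure_eq]
    exact ⟨M.closure_subset_closure (by tauto_set) (hC.mem_closure_sdiff_singleton_of_mem heC),
      heZ⟩
  obtain ⟨C', hC'sub, hC', heC'⟩ := (mem_closure_iff_exists_isCircuit (by simp)).1 he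
  exact ⟨C', hC'sub.trans (insert_subset ⟨heC, heZ⟩ (by tauto_set)), hC', heC'⟩

lemma isCircuit_iff_of_ground_eq_univ (hE : M.E = univ) :
    _root_.IsCircuit M C ↔ M.IsCircuit C := by
  rw [isCircuit_iff_dep_forall_sdiff_singleton_indep, Dep, hE]
  simp only [_root_.IsCircuit, subset_univ, and_true]

section Activity

variable [LinearOrder α]

def extActive (M : Matroid α) (A : Set α) : Set α :=
  {e | e ∉ A ∧ ∃ C, M.IsCircuit C ∧ C ⊆ insert e A ∧ IsLeast C e}

/-- `e ∈ A` is the least element of a cocircuit inside `(E \ A) ∪ {e}`: external activity of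
`E \ A` in the dual. -/
def intActive (M : Matroid α) (A : Set α) : Set α := M✶.extActive (M.E \ A)

lemma extActive_subset_ground (M : Matroid α) (A : Set α) : M.extActive A ⊆ M.E :=
  fun _ ⟨_, _, hC, _, he⟩ ↦ hC.subset_ground he.1

lemma extActive_delete (hgA : g ∉ A) : (M ＼ {g}).extActive A = M.extActive A \ {g} := by
  ext e
  refine ⟨fun ⟨heA, C, hC, hCA, he⟩ ↦ ⟨⟨heA, C, hC.of_delete, hCA, he⟩, ?_⟩,
    fun ⟨⟨heA, C, hC, hCA, he⟩, heg⟩ ↦ ⟨heA, C, ?_, hCA, he⟩⟩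
  · exact ((hC.subset_ground he.1).2 ·)
  · refine (circuit_iff_delete_of_disjoint (disjoint_singleton_right.2 fun hgC ↦ ?_)).1 hC
    rcases hCA hgC with rfl | h
    exacts [heg rfl, hgA h]

lemma IsLoop.mem_extActive (hg : M.IsLoop g) (hgA : g ∉ A) : g ∈ M.extActive A :=
  ⟨hgA, {g}, hg.isCircuit, by simp, by simp⟩

lemma notMem_extActive_of_isGreatest (hg : IsGreatest M.E g) (hl : ¬ M.IsLoop g) :
    g ∉ M.extActive A := by
  rintro ⟨-, C, hC, -, hgC⟩
  refine hl (singleton_isCircuit.1 ?_)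
  rwa [← eq_singleton_iff_unique_mem.2 ⟨hgC.1, fun c hc ↦
    (hg.2 (hC.subset_ground hc)).antisymm (hgC.2 hc)⟩]

lemma extActive_contract (hg : IsGreatest M.E g) (hgA : g ∉ A) :
    (M ／ {g}).extActive A = M.extActive (insert g A) := by
  ext e
  constructor
  · rintro ⟨heA, C, hC, hCA, he⟩
    have heg : e ≠ g := fun h ↦ (hC.subset_ground he.1).2 h
    obtain ⟨C', hC', hCC', hC'C⟩ := hC.exists_subset_isCircuit_of_contract
    refine ⟨by simp [heA, heg], C', hC', hC'C.trans (union_subset ?_ ?_), hCC' he.1,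
      fun c hc ↦ ?_⟩
    · exact hCA.trans (insert_subset_insert (subset_insert _ _))
    · exact singleton_subset_iff.2 (mem_insert_of_mem _ (mem_insert _ _))
    · rcases hC'C hc with hc | rfl
      exacts [he.2 hc, hg.2 (hC.subset_ground he.1).1]
  · rintro ⟨heA, C, hC, hCA, he⟩
    obtain ⟨C', hC'C, hC', heC'⟩ := hC.exists_isCircuit_contract he.1
      fun h ↦ heA (mem_singleton_iff.1 h ▸ mem_insert _ _)
    refine ⟨fun h ↦ heA (mem_insert_of_mem _ h), C', hC', fun c hc ↦ ?_,
      ⟨heC', fun c hc ↦ he.2 (hC'C hc).1⟩⟩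
    obtain ⟨hcC, hcg⟩ := hC'C hc
    rcases hCA hcC with rfl | rfl | hcA
    · exact mem_insert _ _
    · exact absurd rfl hcg
    · exact mem_insert_of_mem _ hcA

lemma intActive_delete (hg : IsGreatest M.E g) (hgA : g ∉ A) :
    (M ＼ {g}).intActive A = M.intActive A := by
  have hgX : g ∉ (M.E \ A) \ {g} := by simp
  rw [intActive, intActive, dual_delete, delete_ground, sdiff_sdiff_comm,
    extActive_contract (M := M✶) hg hgX, insert_sdiff_singleton,
    insert_eq_of_mem (show g ∈ M.E \ A from ⟨hg.1, hgA⟩)]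

lemma intActive_contract (hg : IsGreatest M.E g) (hc : ¬ M.IsColoop g) :
    (M ／ {g}).intActive A = M.intActive (insert g A) := by
  have hgX : g ∉ (M.E \ {g}) \ A := by simp
  rw [intActive, intActive, dual_contract, contract_ground, extActive_delete hgX,
    sdiff_sdiff_comm, sdiff_sdiff, union_singleton,
    sdiff_singleton_eq_self (notMem_extActive_of_isGreatest (M := M✶) hg (by simpa using hc))]

variable {R : Type*} [CommRing R] {x u y v : R}

noncomputable def activityTerm (M : Matroid α) (x u y v : R) (A : Set α) : R :=
  x ^ (M.intActive A).ncard * u ^ M.corank A * y ^ (M.extActive A).ncard * v ^ M.nullity A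

noncomputable def activitySum (M : Matroid α) (E : Finset α) (x u y v : R) : R :=
  ∑ A ∈ E.powerset, M.activityTerm x u y v A

lemma activityTerm_dual [M.Finite] (hA : A ⊆ M.E) :
    M✶.activityTerm x u y v (M.E \ A) = M.activityTerm y v x u A := by
  rw [activityTerm, activityTerm, intActive, dual_dual, dual_ground, sdiff_sdiff_cancel_left hA,
    corank_dual_compl hA, nullity_dual_compl hA, ← intActive]
  ring

lemma activityTerm_delete (hg : IsGreatest M.E g) (hl : ¬ M.IsLoop g) (hc : ¬ M.IsColoop g)
    (hgA : g ∉ A) : (M ＼ {g}).activityTerm x u y v A = M.activityTerm x u y v A := by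
  rw [activityTerm, activityTerm, intActive_delete hg hgA, extActive_delete hgA,
    sdiff_singleton_eq_self (notMem_extActive_of_isGreatest hg hl), corank_delete hc hgA,
    nullity_delete hgA]

lemma activityTerm_contract [M.Finite] (hg : IsGreatest M.E g) (hl : ¬ M.IsLoop g)
    (hc : ¬ M.IsColoop g) (hA : A ⊆ M.E) (hgA : g ∉ A) :
    (M ／ {g}).activityTerm x u y v A = M.activityTerm x u y v (insert g A) := by
  have hA' : A ⊆ (M ／ {g}).E := subset_sdiff_singleton hA hgA
  rw [← activityTerm_dual hA', dual_contract, contract_ground,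
    activityTerm_delete (M := M✶) hg (by rwa [dual_isLoop_iff_isColoop])
      (by rwa [dual_isColoop_iff_isLoop]) (by simp),
    sdiff_sdiff, singleton_union, activityTerm_dual (insert_subset hg.1 hA)]

lemma IsLoop.activityTerm [M.Finite] (hg : M.IsLoop g) (hmax : IsGreatest M.E g) (hgA : g ∉ A) :
    M.activityTerm x u y v A = y * (M ＼ {g}).activityTerm x u y v A := by
  rw [Matroid.activityTerm, Matroid.activityTerm, intActive_delete hmax hgA,
    extActive_delete hgA, corank_delete hg.not_isColoop hgA, nullity_delete hgA,
    ← ncard_sdiff_singleton_add_one (hg.mem_extActive hgA)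
      (M.ground_finite.subset (M.extActive_subset_ground A))]
  ring

lemma IsLoop.activityTerm_insert [M.Finite] (hg : M.IsLoop g) (hmax : IsGreatest M.E g)
    (hgA : g ∉ A) (hA : A.Finite) :
    M.activityTerm x u y v (insert g A) = v * (M ＼ {g}).activityTerm x u y v A := by
  have hcd : M ／ {g} = M ＼ {g} := contract_eq_delete_of_subset_loops (singleton_subset_iff.2 hg)
  rw [Matroid.activityTerm, Matroid.activityTerm, ← intActive_contract hmax hg.not_isColoop,
    ← extActive_contract hmax hgA, hcd, hg.corank_insert, hg.nullity_insert hgA hA,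
    corank_delete hg.not_isColoop hgA, nullity_delete hgA]
  ring

lemma activitySum_dual {E : Finset α} (hE : M.E = E) :
    M✶.activitySum E x u y v = M.activitySum E y v x u := by
  have := finite_of_ground_eq_coe hE
  rw [activitySum, activitySum, ← Finset.sum_powerset_sdiff]
  refine Finset.sum_congr rfl fun A hA ↦ ?_
  rw [Finset.coe_sdiff, ← hE,
    activityTerm_dual (hE ▸ Finset.coe_subset.2 (Finset.mem_powerset.1 hA))]

lemma tutteSum_eq_activitySum_of_ground_eq_empty (hE : M.E = ∅) :
    M.tutteSum ∅ (x + u) (y + v) = M.activitySum ∅ x u y v := by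
  have hr : rk M univ = 0 := by
    have h := M.eRank_le_encard_ground
    rw [hE, encard_empty, nonpos_iff_eq_zero] at h
    rw [rk_eq_toNat_eRk, eRk_univ_eq, h, ENat.toNat_zero]
  have hext : ∀ N : Matroid α, N.E = ∅ → (N.extActive ∅).ncard = 0 := fun N hN ↦ by
    have h := N.extActive_subset_ground ∅
    rw [hN, subset_empty_iff] at h
    rw [h, ncard_empty]
  simp [tutteSum, activitySum, tutteTerm, activityTerm, corank, nullity, intActive, hr,
    hext M hE, hext M✶ hE, hE]

lemma isGreatest_of_ground_eq_insert {s : Finset α} (hE : M.E = insert g ↑s)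
    (hs : ∀ a ∈ s, a < g) : IsGreatest M.E g :=
  hE ▸ ⟨mem_insert g _, fun _ ha ↦ ha.elim (·.le) fun ha ↦ (hs _ ha).le⟩

lemma tutteSum_eq_activitySum_insert_of_isLoop {s : Finset α} (hE : M.E = insert g ↑s)
    (hs : ∀ a ∈ s, a < g) (hg : M.IsLoop g)
    (ih : (M ＼ {g}).tutteSum s (x + u) (y + v) = (M ＼ {g}).activitySum s x u y v) :
    M.tutteSum (insert g s) (x + u) (y + v) = M.activitySum (insert g s) x u y v := by
  have hgs : g ∉ s := fun h ↦ (hs g h).false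
  have hmax := isGreatest_of_ground_eq_insert hE hs
  have := finite_of_ground_eq_coe (E := insert g s) (by rw [hE, Finset.coe_insert])
  rw [tutteSum, activitySum, Finset.sum_powerset_insert hgs, Finset.sum_powerset_insert hgs,
    ← Finset.sum_add_distrib, ← Finset.sum_add_distrib]
  calc _ = (y + v) * (M ＼ {g}).tutteSum s (x + u) (y + v) := by
        rw [tutteSum, Finset.mul_sum]
        refine Finset.sum_congr rfl fun A hA ↦ ?_
        have hgA : g ∉ (A : Set α) := fun h ↦ hgs (Finset.mem_powerset.1 hA h)
        rw [Finset.coe_insert, hg.tutteTerm_insert hgA A.finite_toSet,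
          tutteTerm_delete hg.not_isColoop hgA]
        ring
    _ = (y + v) * (M ＼ {g}).activitySum s x u y v := by rw [ih]
    _ = _ := by
        rw [activitySum, Finset.mul_sum]
        refine Finset.sum_congr rfl fun A hA ↦ ?_
        have hgA : g ∉ (A : Set α) := fun h ↦ hgs (Finset.mem_powerset.1 hA h)
        rw [Finset.coe_insert, hg.activityTerm hmax hgA,
          hg.activityTerm_insert hmax hgA A.finite_toSet]
        ring

lemma tutteSum_eq_activitySum_insert {s : Finset α} (hE : M.E = insert g ↑s)
    (hs : ∀ a ∈ s, a < g) (hl : ¬ M.IsLoop g) (hc : ¬ M.IsColoop g)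
    (ihd : (M ＼ {g}).tutteSum s (x + u) (y + v) = (M ＼ {g}).activitySum s x u y v)
    (ihc : (M ／ {g}).tutteSum s (x + u) (y + v) = (M ／ {g}).activitySum s x u y v) :
    M.tutteSum (insert g s) (x + u) (y + v) = M.activitySum (insert g s) x u y v := by
  have hgs : g ∉ s := fun h ↦ (hs g h).false
  have hmax := isGreatest_of_ground_eq_insert hE hs
  have := finite_of_ground_eq_coe (E := insert g s) (by rw [hE, Finset.coe_insert])
  have hsub : ∀ A ∈ s.powerset, g ∉ (A : Set α) ∧ (A : Set α) ⊆ M.E := fun A hA ↦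
    ⟨fun h ↦ hgs (Finset.mem_powerset.1 hA h),
      hE ▸ (Finset.coe_subset.2 (Finset.mem_powerset.1 hA)).trans (subset_insert _ _)⟩
  rw [tutteSum, activitySum, Finset.sum_powerset_insert hgs, Finset.sum_powerset_insert hgs]
  calc _ = (M ＼ {g}).tutteSum s (x + u) (y + v) + (M ／ {g}).tutteSum s (x + u) (y + v) := by
        congr 1 <;> refine Finset.sum_congr rfl fun A hA ↦ ?_ <;> obtain ⟨hgA, hAE⟩ := hsub A hA
        · rw [tutteTerm_delete hc hgA]
        · rw [Finset.coe_insert, tutteTerm_contract hl (insert_subset hmax.1 hAE) hgA]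
    _ = (M ＼ {g}).activitySum s x u y v + (M ／ {g}).activitySum s x u y v := by rw [ihd, ihc]
    _ = _ := by
        congr 1 <;> refine Finset.sum_congr rfl fun A hA ↦ ?_ <;> obtain ⟨hgA, hAE⟩ := hsub A hA
        · rw [activityTerm_delete hmax hl hc hgA]
        · rw [Finset.coe_insert, activityTerm_contract hmax hl hc hAE hgA]

lemma tutteSum_eq_activitySum_dual_iff {E : Finset α} (hE : M.E = E) :
    M✶.tutteSum E (y + v) (x + u) = M✶.activitySum E y v x u ↔
      M.tutteSum E (x + u) (y + v) = M.activitySum E x u y v := by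
  rw [tutteSum_dual hE, activitySum_dual hE]

theorem tutteSum_add_eq_activitySum (E : Finset α) (M : Matroid α) (hE : M.E = E)
    (x u y v : R) : M.tutteSum E (x + u) (y + v) = M.activitySum E x u y v := by
  induction E using Finset.induction_on_max generalizing M x u y v with
  | empty => exact tutteSum_eq_activitySum_of_ground_eq_empty (by simpa using hE)
  | insert g s hs ih =>
    have hE' : M.E = insert g ↑s := by rw [hE, Finset.coe_insert]
    have hdel : (M ＼ {g}).E = s := by
      rw [delete_ground, hE', insert_sdiff_self_of_notMem fun h ↦ (hs g h).false]
    have hcon : (M ／ {g}).E = s := hdel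
    by_cases hl : M.IsLoop g
    · exact tutteSum_eq_activitySum_insert_of_isLoop hE' hs hl (ih _ hdel x u y v)
    by_cases hc : M.IsColoop g
    · -- `g` is a loop of `M✶`, and `M✶ ＼ {g} = (M ／ {g})✶`.
      rw [← tutteSum_eq_activitySum_dual_iff hE]
      refine tutteSum_eq_activitySum_insert_of_isLoop hE' hs (dual_isLoop_iff_isColoop.2 hc) ?_
      rw [← dual_contract, tutteSum_eq_activitySum_dual_iff hcon]
      exact ih _ hcon x u y v
    exact tutteSum_eq_activitySum_insert hE' hs hl hc (ih _ hdel x u y v) (ih _ hcon x u y v)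

lemma extSet_eq_extActive (hE : M.E = univ) (A : Set α) : ExtSet M A = M.extActive A := by
  ext e
  simp only [ExtSet, extActive, mem_ofPred_eq, union_singleton, isCircuit_iff_of_ground_eq_univ hE]
  rfl

lemma intSet_eq_intActive (hE : M.E = univ) (A : Set α) : IntSet M A = M.intActive A := by
  ext e
  simp only [IntSet, intActive, extActive, _root_.IsCocircuit, mem_ofPred_eq, union_singleton, hE,
    isCircuit_iff_of_ground_eq_univ (M := M✶) hE, ← compl_eq_univ_sdiff, notMem_compl_iff]
  rfl

end Activity

end Matroid

open MvPolynomial in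
theorem tutte_four_variable_expansion {α : Type*} [Fintype α] [LinearOrder α]
    (M : Matroid α) (hE : M.E = Set.univ) :
    tutteEval M (X 0 + X 1 : MvPolynomial (Fin 4) ℤ) (X 2 + X 3) =
      ∑ A ∈ (Finset.univ : Finset α).powerset,
        X 0 ^ (IntSet M (A : Set α)).ncard *
          X 1 ^ (rk M Set.univ - rk M (A : Set α)) *
          X 2 ^ (ExtSet M (A : Set α)).ncard *
          X 3 ^ (A.card - rk M (A : Set α)) := by
  have h := M.tutteSum_add_eq_activitySum Finset.univ (by rw [hE, Finset.coe_univ])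
    (X 0 : MvPolynomial (Fin 4) ℤ) (X 1) (X 2) (X 3)
  simp only [Matroid.tutteSum, Matroid.activitySum, Matroid.tutteTerm, Matroid.activityTerm,
    Matroid.corank, Matroid.nullity, ncard_coe_finset] at h
  simpa only [tutteEval, Matroid.extSet_eq_extActive hE, Matroid.intSet_eq_intActive hE] using h
end
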